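/- If R is a natural number with R ≥ 1 and R^R ≤ m for a real m ≥ 2, then R ≤ 2·log₂ m / log₂ log₂ m whenever log₂ log₂ m ≥ 1 (i.e., m ≥ 4). -/

import Mathlib

/-!
Write `x = log₂ m` and `L = log₂ x`; from `R^R ≤ m` we get `R log₂ R ≤ x`. Since `log₂ √x ≤ √x`,
we have `L ≤ 2√x`, so the bound `B = 2x / L` is at least `√x`. If `R > B`, then `R > √x`, hence
`log₂ R > L / 2`, and `R log₂ R > B · L / 2 = x`, a contradiction.
-/

open Real

lemma Real.log_le_div_exp_one {y : ℝ} (hy : 0 < y) : log y ≤ y / exp 1 := by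
  have h := log_le_sub_one_of_pos (div_pos hy (exp_pos 1))
  rw [log_div hy.ne' (exp_pos 1).ne', log_exp] at h
  linarith

lemma Real.logb_two_le_self {y : ℝ} (hy : 0 ≤ y) : logb 2 y ≤ y := by
  rcases hy.eq_or_lt with rfl | hy
  · simp
  have he : (2.7182818283 : ℝ) < exp 1 := exp_one_gt_d9
  have hl : (0.6931471803 : ℝ) < log 2 := log_two_gt_d9
  -- `e · log 2 > 1`, so `log y ≤ y / e ≤ y log 2`
  have hle : y / exp 1 ≤ y * log 2 := by
    have : 1 ≤ log 2 * exp 1 := by nlinarith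
    rw [div_le_iff₀ (exp_pos 1), mul_assoc]
    exact le_mul_of_one_le_right hy.le this
  rw [logb, div_le_iff₀ (log_pos one_lt_two)]
  exact (log_le_div_exp_one hy).trans hle

lemma Real.logb_sqrt (b : ℝ) {x : ℝ} (hx : 0 ≤ x) : logb b (√x) = logb b x / 2 := by
  rw [logb, logb, log_sqrt hx, div_right_comm]

lemma Real.le_two_mul_div_logb_of_mul_logb_le {r x : ℝ} (hx : 1 < x)
    (h : r * logb 2 r ≤ x) : r ≤ 2 * x / logb 2 x := by
  set L := logb 2 x
  have hL : 0 < L := logb_pos one_lt_two hx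
  have hx0 : 0 ≤ x := by linarith
  have hsx : 0 < √x := sqrt_pos.mpr (by linarith)
  have hL_le : L / 2 ≤ √x := by
    rw [← logb_sqrt 2 hx0]
    exact logb_two_le_self hsx.le
  have hsqrt_le : √x ≤ 2 * x / L := by
    rw [le_div_iff₀ hL]
    nlinarith [mul_self_sqrt hx0]
  by_contra! hr
  have hlog : L / 2 < logb 2 r := by
    rw [← logb_sqrt 2 hx0]
    exact logb_lt_logb one_lt_two hsx (hsqrt_le.trans_lt hr)
  have : x < r * logb 2 r :=
    calc x = 2 * x / L * (L / 2) := by field_simp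
      _ < r * logb 2 r := mul_lt_mul'' hr hlog (by positivity) (by positivity)
  linarith

theorem stmt_19_general (R : ℕ) (m : ℝ)
    (hRm : (R : ℝ) ^ R ≤ m) (hll : 1 ≤ Real.logb 2 (Real.logb 2 m)) :
    (R : ℝ) ≤ 2 * Real.logb 2 m / Real.logb 2 (Real.logb 2 m) := by
  have hRR : 1 ≤ (R : ℝ) ^ R := by
    rcases R.eq_zero_or_pos with rfl | hR
    · simp
    · exact one_le_pow₀ (by exact_mod_cast hR)
  have hx : 1 < logb 2 m := by
    by_contra! h
    have := logb_nonpos one_lt_two (logb_nonneg one_lt_two (hRR.trans hRm)) h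
    linarith
  apply le_two_mul_div_logb_of_mul_logb_le hx
  rw [← logb_pow]
  exact logb_le_logb_of_le one_lt_two (by linarith) hRm

theorem stmt_19 (R : ℕ) (hR : 1 ≤ R) (m : ℝ) (hm : 2 ≤ m)
    (hRm : (R : ℝ) ^ R ≤ m) (hll : 1 ≤ Real.logb 2 (Real.logb 2 m)) :
    (R : ℝ) ≤ 2 * Real.logb 2 m / Real.logb 2 (Real.logb 2 m) :=
  stmt_19_general R m hRm hll
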